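/- Let α > 0, h > 0, 0 < ε < 1 and U > 0 be reals with 0 < αh < 2/3 and 1 − 2αh(1 − ε) + (αh)²ε(1 + ε) ≥ 0. Suppose the quaternion sequence (q_k) satisfies q_{k+1} = (1 − αh(‖q_k‖² − 1)) q_k + (h/2) q_k w_k with each w_k pure imaginary, and let e_k = ‖q_k‖² − 1. If at step k one has |e_k| ≤ ε and ‖w_k‖ ≤ U, then e_{k+1}² − e_k² ≤ −A(αh,ε)·e_k² + h²·N(h,αh,ε,U), where A(αh,ε) = αh(1 − ε)(2 − αh·ε)(2 − 2αh − αh(2 − αh)ε + (αh)²ε²) and N(h,αh,ε,U) = (1 − 2αh(1 − ε) + (αh)²ε(1 + ε))·ε(1 + ε)·U²/2 + (1 + ε)²·h²U⁴/16. -/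

import Mathlib

lemma re_mul_comm (a b : Quaternion ℝ) : (a*b).re = (b*a).re := by
  simp [Quaternion.re_mul]; ring

lemma inner_q_qw (q w : Quaternion ℝ) (hw : w.re = 0) :
    inner ℝ q (q * w) = 0 := by
  rw [Quaternion.inner_def, star_mul, ← mul_assoc, re_mul_comm, ← mul_assoc,
    Quaternion.star_mul_self]
  simp [Quaternion.re_mul, hw]

lemma norm_step (q w : Quaternion ℝ) (hw : w.re = 0) (a b : ℝ) :
    ‖a • q + b • (q * w)‖^2 = a^2 * ‖q‖^2 + b^2 * (‖q‖^2 * ‖w‖^2) := by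
  rw [norm_add_sq_real, real_inner_smul_left, real_inner_smul_right,
    inner_q_qw q w hw]
  simp [norm_smul, mul_pow, norm_mul]


lemma claim2d (s ε : ℝ) (hs1 : s ≤ 2/3) (h12 : 1/2 ≤ s) (hε0 : (0:ℝ) ≤ ε) (hε1 : ε ≤ 1)
    (hG : 0 ≤ 1 - 2*s*(1-ε) + s^2*ε*(1+ε)) :
    (2*s-1)^2 ≤ 2*ε*(1 - (2*s-1)^2 - s*(1-ε)*(2-s*ε)*(2-2*s - s*(2-s)*ε + s^2*ε^2)) := by
  set Gq : ℝ := 1 - 2*s*(1-ε) + s^2*ε*(1+ε) with hGq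
  have hG' : (0:ℝ) ≤ Gq := hG
  have ht : (0:ℝ) ≤ 2*s-1 := by linarith
  have hU : (0:ℝ) ≤ 4/3-2*s := by linarith
  have hV : (0:ℝ) ≤ 1-ε := by linarith
  have h0 : (0:ℝ) ≤ (2*s-1)^0 * (4/3-2*s)^0 * ε^1 * (1-ε)^0 * Gq^2 := mul_nonneg (mul_nonneg (mul_nonneg (mul_nonneg (pow_nonneg ht 0) (pow_nonneg hU 0)) (pow_nonneg hε0 1)) (pow_nonneg hV 0)) (pow_nonneg hG' 2)
  have h1 : (0:ℝ) ≤ (2*s-1)^0 * (4/3-2*s)^0 * ε^1 * (1-ε)^2 * Gq^1 := mul_nonneg (mul_nonneg (mul_nonneg (mul_nonneg (pow_nonneg ht 0) (pow_nonneg hU 0)) (pow_nonneg hε0 1)) (pow_nonneg hV 2)) (pow_nonneg hG' 1)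
  have h2 : (0:ℝ) ≤ (2*s-1)^0 * (4/3-2*s)^0 * ε^3 * (1-ε)^0 * Gq^0 := mul_nonneg (mul_nonneg (mul_nonneg (mul_nonneg (pow_nonneg ht 0) (pow_nonneg hU 0)) (pow_nonneg hε0 3)) (pow_nonneg hV 0)) (pow_nonneg hG' 0)
  have h3 : (0:ℝ) ≤ (2*s-1)^0 * (4/3-2*s)^0 * ε^3 * (1-ε)^1 * Gq^0 := mul_nonneg (mul_nonneg (mul_nonneg (mul_nonneg (pow_nonneg ht 0) (pow_nonneg hU 0)) (pow_nonneg hε0 3)) (pow_nonneg hV 1)) (pow_nonneg hG' 0)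
  have h4 : (0:ℝ) ≤ (2*s-1)^0 * (4/3-2*s)^0 * ε^4 * (1-ε)^1 * Gq^0 := mul_nonneg (mul_nonneg (mul_nonneg (mul_nonneg (pow_nonneg ht 0) (pow_nonneg hU 0)) (pow_nonneg hε0 4)) (pow_nonneg hV 1)) (pow_nonneg hG' 0)
  have h5 : (0:ℝ) ≤ (2*s-1)^0 * (4/3-2*s)^1 * ε^1 * (1-ε)^1 * Gq^1 := mul_nonneg (mul_nonneg (mul_nonneg (mul_nonneg (pow_nonneg ht 0) (pow_nonneg hU 1)) (pow_nonneg hε0 1)) (pow_nonneg hV 1)) (pow_nonneg hG' 1)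
  have h6 : (0:ℝ) ≤ (2*s-1)^0 * (4/3-2*s)^1 * ε^2 * (1-ε)^1 * Gq^1 := mul_nonneg (mul_nonneg (mul_nonneg (mul_nonneg (pow_nonneg ht 0) (pow_nonneg hU 1)) (pow_nonneg hε0 2)) (pow_nonneg hV 1)) (pow_nonneg hG' 1)
  have h7 : (0:ℝ) ≤ (2*s-1)^0 * (4/3-2*s)^1 * ε^3 * (1-ε)^0 * Gq^0 := mul_nonneg (mul_nonneg (mul_nonneg (mul_nonneg (pow_nonneg ht 0) (pow_nonneg hU 1)) (pow_nonneg hε0 3)) (pow_nonneg hV 0)) (pow_nonneg hG' 0)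
  have h8 : (0:ℝ) ≤ (2*s-1)^0 * (4/3-2*s)^1 * ε^3 * (1-ε)^2 * Gq^0 := mul_nonneg (mul_nonneg (mul_nonneg (mul_nonneg (pow_nonneg ht 0) (pow_nonneg hU 1)) (pow_nonneg hε0 3)) (pow_nonneg hV 2)) (pow_nonneg hG' 0)
  have h9 : (0:ℝ) ≤ (2*s-1)^0 * (4/3-2*s)^1 * ε^4 * (1-ε)^0 * Gq^0 := mul_nonneg (mul_nonneg (mul_nonneg (mul_nonneg (pow_nonneg ht 0) (pow_nonneg hU 1)) (pow_nonneg hε0 4)) (pow_nonneg hV 0)) (pow_nonneg hG' 0)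
  have h10 : (0:ℝ) ≤ (2*s-1)^0 * (4/3-2*s)^2 * ε^1 * (1-ε)^1 * Gq^1 := mul_nonneg (mul_nonneg (mul_nonneg (mul_nonneg (pow_nonneg ht 0) (pow_nonneg hU 2)) (pow_nonneg hε0 1)) (pow_nonneg hV 1)) (pow_nonneg hG' 1)
  have h11 : (0:ℝ) ≤ (2*s-1)^0 * (4/3-2*s)^2 * ε^2 * (1-ε)^1 * Gq^0 := mul_nonneg (mul_nonneg (mul_nonneg (mul_nonneg (pow_nonneg ht 0) (pow_nonneg hU 2)) (pow_nonneg hε0 2)) (pow_nonneg hV 1)) (pow_nonneg hG' 0)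
  have h12 : (0:ℝ) ≤ (2*s-1)^0 * (4/3-2*s)^2 * ε^2 * (1-ε)^1 * Gq^1 := mul_nonneg (mul_nonneg (mul_nonneg (mul_nonneg (pow_nonneg ht 0) (pow_nonneg hU 2)) (pow_nonneg hε0 2)) (pow_nonneg hV 1)) (pow_nonneg hG' 1)
  have h13 : (0:ℝ) ≤ (2*s-1)^0 * (4/3-2*s)^2 * ε^2 * (1-ε)^3 * Gq^0 := mul_nonneg (mul_nonneg (mul_nonneg (mul_nonneg (pow_nonneg ht 0) (pow_nonneg hU 2)) (pow_nonneg hε0 2)) (pow_nonneg hV 3)) (pow_nonneg hG' 0)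
  have h14 : (0:ℝ) ≤ (2*s-1)^0 * (4/3-2*s)^2 * ε^3 * (1-ε)^1 * Gq^0 := mul_nonneg (mul_nonneg (mul_nonneg (mul_nonneg (pow_nonneg ht 0) (pow_nonneg hU 2)) (pow_nonneg hε0 3)) (pow_nonneg hV 1)) (pow_nonneg hG' 0)
  have h15 : (0:ℝ) ≤ (2*s-1)^0 * (4/3-2*s)^3 * ε^2 * (1-ε)^0 * Gq^0 := mul_nonneg (mul_nonneg (mul_nonneg (mul_nonneg (pow_nonneg ht 0) (pow_nonneg hU 3)) (pow_nonneg hε0 2)) (pow_nonneg hV 0)) (pow_nonneg hG' 0)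
  have h16 : (0:ℝ) ≤ (2*s-1)^0 * (4/3-2*s)^3 * ε^2 * (1-ε)^1 * Gq^0 := mul_nonneg (mul_nonneg (mul_nonneg (mul_nonneg (pow_nonneg ht 0) (pow_nonneg hU 3)) (pow_nonneg hε0 2)) (pow_nonneg hV 1)) (pow_nonneg hG' 0)
  have h17 : (0:ℝ) ≤ (2*s-1)^0 * (4/3-2*s)^3 * ε^3 * (1-ε)^2 * Gq^0 := mul_nonneg (mul_nonneg (mul_nonneg (mul_nonneg (pow_nonneg ht 0) (pow_nonneg hU 3)) (pow_nonneg hε0 3)) (pow_nonneg hV 2)) (pow_nonneg hG' 0)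
  have h18 : (0:ℝ) ≤ (2*s-1)^0 * (4/3-2*s)^4 * ε^4 * (1-ε)^0 * Gq^0 := mul_nonneg (mul_nonneg (mul_nonneg (mul_nonneg (pow_nonneg ht 0) (pow_nonneg hU 4)) (pow_nonneg hε0 4)) (pow_nonneg hV 0)) (pow_nonneg hG' 0)
  have h19 : (0:ℝ) ≤ (2*s-1)^1 * (4/3-2*s)^0 * ε^0 * (1-ε)^0 * Gq^1 := mul_nonneg (mul_nonneg (mul_nonneg (mul_nonneg (pow_nonneg ht 1) (pow_nonneg hU 0)) (pow_nonneg hε0 0)) (pow_nonneg hV 0)) (pow_nonneg hG' 1)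
  have h20 : (0:ℝ) ≤ (2*s-1)^1 * (4/3-2*s)^0 * ε^1 * (1-ε)^0 * Gq^0 := mul_nonneg (mul_nonneg (mul_nonneg (mul_nonneg (pow_nonneg ht 1) (pow_nonneg hU 0)) (pow_nonneg hε0 1)) (pow_nonneg hV 0)) (pow_nonneg hG' 0)
  have h21 : (0:ℝ) ≤ (2*s-1)^1 * (4/3-2*s)^1 * ε^1 * (1-ε)^0 * Gq^0 := mul_nonneg (mul_nonneg (mul_nonneg (mul_nonneg (pow_nonneg ht 1) (pow_nonneg hU 1)) (pow_nonneg hε0 1)) (pow_nonneg hV 0)) (pow_nonneg hG' 0)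
  have h22 : (0:ℝ) ≤ (2*s-1)^1 * (4/3-2*s)^1 * ε^1 * (1-ε)^0 * Gq^1 := mul_nonneg (mul_nonneg (mul_nonneg (mul_nonneg (pow_nonneg ht 1) (pow_nonneg hU 1)) (pow_nonneg hε0 1)) (pow_nonneg hV 0)) (pow_nonneg hG' 1)
  have h23 : (0:ℝ) ≤ (2*s-1)^1 * (4/3-2*s)^3 * ε^2 * (1-ε)^0 * Gq^0 := mul_nonneg (mul_nonneg (mul_nonneg (mul_nonneg (pow_nonneg ht 1) (pow_nonneg hU 3)) (pow_nonneg hε0 2)) (pow_nonneg hV 0)) (pow_nonneg hG' 0)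
  rw [hGq] at h0 h1 h2 h3 h4 h5 h6 h7 h8 h9 h10 h11 h12 h13 h14 h15 h16 h17 h18 h19 h20 h21 h22 h23
  linarith [h0, h1, h2, h3, h4, h5, h6, h7, h8, h9, h10, h11, h12, h13, h14, h15, h16, h17, h18, h19, h20, h21, h22, h23]


set_option maxHeartbeats 1000000 in
lemma L1_Pge (s ε e : ℝ) (hs0 : 0 < s) (hs1 : s < 2/3) (hε0 : 0 < ε) (hε1 : ε < 1)
    (he1 : -ε ≤ e) (he2 : e ≤ ε) :
    s*(1-ε)*(2-s*ε)*(2-2*s - s*(2-s)*ε + s^2*ε^2)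
      + (1-2*s-s*e*(2-s)+s^2*e^2)^2 ≤ 1 := by
  have hsε : s*ε ≤ 2/3 := by
    have h := mul_le_mul_of_nonneg_right hs1.le hε0.le
    linarith
  have f3 : (0:ℝ) ≤ 2-2*s - s*ε*(2-s)+s^2*ε^2 := by
    nlinarith [sq_nonneg (2*s*ε - (2-s)), mul_nonneg hs0.le (by linarith : (0:ℝ) ≤ 2/3 - s)]
  have f1 : (1-ε)*(2-s*ε) ≤ 2 + e*(2-s) - s*e^2 := by
    nlinarith [mul_nonneg (by linarith : (0:ℝ) ≤ e+ε)
        (by nlinarith [mul_nonneg hs0.le (by linarith : (0:ℝ) ≤ ε-e)] :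
          (0:ℝ) ≤ 2-s-s*e+s*ε),
      mul_nonneg (mul_nonneg hs0.le hε0.le) (by linarith : (0:ℝ) ≤ 1-ε)]
  have hf2aux : 0 ≤ s*(2-s)-s^2*(ε+e) := by
    have h1 : s*(ε+e) ≤ 2/3*(ε+e) := mul_le_mul_of_nonneg_right hs1.le (by linarith)
    nlinarith [mul_nonneg hs0.le (by linarith : (0:ℝ) ≤ 2 - s - s*(ε+e))]
  have f2 : 2-2*s - s*ε*(2-s)+s^2*ε^2 ≤ 1+(1-2*s-s*e*(2-s)+s^2*e^2) := by
    nlinarith [mul_nonneg (by linarith : (0:ℝ) ≤ ε-e) hf2aux]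
  have f4 : (0:ℝ) ≤ (1-ε)*(2-s*ε) := mul_nonneg (by linarith) (by linarith)
  have h1g : s*((1-ε)*(2-s*ε)) ≤ 1 - (1-2*s-s*e*(2-s)+s^2*e^2) := by
    have hid : 1 - (1-2*s-s*e*(2-s)+s^2*e^2) = s*(2 + e*(2-s) - s*e^2) := by ring
    rw [hid]
    exact mul_le_mul_of_nonneg_left f1 hs0.le
  have h1gpos : 0 ≤ 1 - (1-2*s-s*e*(2-s)+s^2*e^2) := le_trans (mul_nonneg hs0.le f4) h1g
  have hprod : (s*((1-ε)*(2-s*ε))) * (2-2*s - s*ε*(2-s)+s^2*ε^2) ≤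
      (1 - (1-2*s-s*e*(2-s)+s^2*e^2))*(1+(1-2*s-s*e*(2-s)+s^2*e^2)) :=
    mul_le_mul h1g f2 f3 h1gpos
  nlinarith [hprod]

set_option maxHeartbeats 1000000 in
lemma L2_easy (s ε e : ℝ) (hs0 : 0 < s) (hs1 : s < 2/3) (hε0 : 0 < ε) (hε1 : ε < 1)
    (he0 : 0 ≤ e) (he2 : e ≤ ε)
    (hG : 0 ≤ 1 - 2*s*(1-ε) + s^2*ε*(1+ε)) :
    e*(1-2*s-s*e*(2-s)+s^2*e^2) ≤ ε*(1 - 2*s*(1-ε) + s^2*ε*(1+ε)) := by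
  rcases le_or_gt s (1/2) with hs12 | hs12
  · nlinarith [mul_nonneg (by linarith : (0:ℝ) ≤ 1-2*s) (by linarith : (0:ℝ) ≤ ε-e),
      mul_nonneg (mul_nonneg (mul_nonneg hs0.le hs0.le) (by linarith : (0:ℝ) ≤ ε-e))
        (by linarith : (0:ℝ) ≤ ε+e),
      mul_nonneg (mul_nonneg (mul_nonneg hs0.le hs0.le) (by linarith : (0:ℝ) ≤ ε-e))
        (by nlinarith [sq_nonneg (ε+e), sq_nonneg ε, sq_nonneg e] : (0:ℝ) ≤ ε^2+ε*e+e^2),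
      mul_nonneg hs0.le (sq_nonneg ε), mul_nonneg hs0.le (sq_nonneg e)]
  · have hse : s*e ≤ s*ε := mul_le_mul_of_nonneg_left he2 hs0.le
    have hsε : s*ε ≤ 2/3 := by
      have h := mul_le_mul_of_nonneg_right hs1.le hε0.le
      linarith
    have hD : e*(1-2*s-s*e*(2-s)+s^2*e^2) ≤ 0 := by
      nlinarith [mul_nonneg he0 (by linarith : (0:ℝ) ≤ 2*s-1),
        mul_nonneg (mul_nonneg (mul_nonneg hs0.le he0) he0)
          (by linarith : (0:ℝ) ≤ 2-s-s*e)]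
    have : (0:ℝ) ≤ ε*(1 - 2*s*(1-ε) + s^2*ε*(1+ε)) := mul_nonneg hε0.le hG
    linarith

set_option maxHeartbeats 2000000 in
lemma L3_hard (s ε e : ℝ) (hs0 : 0 < s) (hs1 : s < 2/3) (hε0 : 0 < ε) (hε1 : ε < 1)
    (he1 : -ε ≤ e) (heneg : e < 0)
    (hgneg : 1-2*s-s*e*(2-s)+s^2*e^2 < 0)
    (hG : 0 ≤ 1 - 2*s*(1-ε) + s^2*ε*(1+ε)) :
    (1-2*s-s*e*(2-s)+s^2*e^2)^2 ≤
      (1 - (1-2*s-s*e*(2-s)+s^2*e^2)^2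
        - s*(1-ε)*(2-s*ε)*(2-2*s - s*(2-s)*ε + s^2*ε^2))*((ε-e)*(2+ε+e)) := by
  have hsε : s*ε ≤ 2/3 := by
    have h := mul_le_mul_of_nonneg_right hs1.le hε0.le
    linarith
  have hse : s*e ≤ s*ε := mul_le_mul_of_nonneg_left (by linarith) hs0.le
  have haux2 : (0:ℝ) ≤ 2-s-s*e := by linarith
  have hs12 : 1/2 < s := by
    by_contra hh
    push_neg at hh
    nlinarith [mul_nonneg (mul_nonneg hs0.le (by linarith : (0:ℝ) ≤ -e)) haux2]
  have hgb : -(1-2*s-s*e*(2-s)+s^2*e^2) ≤ 2*s-1 := by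
    nlinarith [mul_nonneg (mul_nonneg hs0.le (by linarith : (0:ℝ) ≤ -e)) haux2]
  have hc2d := claim2d s ε hs1.le hs12.le hε0.le hε1.le hG
  have hg2 : (1-2*s-s*e*(2-s)+s^2*e^2)^2 ≤ (2*s-1)^2 := by
    nlinarith [hgb, hgneg]
  have hP0 : 0 ≤ 1 - (2*s-1)^2 - s*(1-ε)*(2-s*ε)*(2-2*s - s*(2-s)*ε + s^2*ε^2) := by
    nlinarith [hc2d, sq_nonneg (2*s-1)]
  have hcpos : (0:ℝ) < (ε-e)*(2+ε+e) := mul_pos (by linarith) (by linarith)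
  have hcge : 2*ε ≤ (ε-e)*(2+ε+e) := by
    nlinarith [mul_nonneg (by linarith : (0:ℝ) ≤ -e) (by linarith : (0:ℝ) ≤ ε+e)]
  have hPge : 1 - (2*s-1)^2 - s*(1-ε)*(2-s*ε)*(2-2*s - s*(2-s)*ε + s^2*ε^2) ≤
      1 - (1-2*s-s*e*(2-s)+s^2*e^2)^2
        - s*(1-ε)*(2-s*ε)*(2-2*s - s*(2-s)*ε + s^2*ε^2) := by
    linarith [hg2]
  have hstep1 := mul_le_mul_of_nonneg_left hcge hP0
  have hstep2 := mul_le_mul_of_nonneg_right hPge hcpos.le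
  nlinarith [hc2d, hg2, hstep1, hstep2]

set_option maxHeartbeats 1000000 in
lemma abstract_quad (g A Gv ε e m M : ℝ)
    (hε0 : 0 < ε) (hε1 : ε < 1) (he1 : -ε ≤ e) (he2 : e ≤ ε)
    (hm0 : 0 ≤ m) (hmM : m ≤ M) (hG : 0 ≤ Gv) (hP : A + g^2 ≤ 1)
    (hsplit : e*g ≤ ε*Gv ∨ (e < 0 ∧ g < 0 ∧
      g^2 ≤ (1-g^2-A)*((ε-e)*(2+ε+e)))) :
    (e*g + (1+e)*m)^2 - e^2 ≤ -A*e^2 + 2*(Gv*(ε*(1+ε)))*M + (1+ε)^2*M^2 := by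
  have hM0 : 0 ≤ M := le_trans hm0 hmM
  rcases hsplit with hcase | ⟨heneg, hgneg, hPc⟩
  · have hem : (1+e)*m ≤ (1+ε)*M :=
      mul_le_mul (by linarith) hmM hm0 (by linarith)
    have hem0 : 0 ≤ (1+e)*m := mul_nonneg (by linarith) hm0
    have h1 : e*g*((1+e)*m) ≤ ε*Gv*((1+ε)*M) := by
      rcases le_or_gt (e*g) 0 with hneg | hpos
      · have ha : e*g*((1+e)*m) ≤ 0 := mul_nonpos_of_nonpos_of_nonneg hneg hem0
        have hb : (0:ℝ) ≤ ε*Gv*((1+ε)*M) :=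
          mul_nonneg (mul_nonneg hε0.le hG) (mul_nonneg (by linarith) hM0)
        linarith
      · exact mul_le_mul hcase hem hem0 (le_trans hpos.le hcase)
    have h2 : ((1+e)*m)^2 ≤ ((1+ε)*M)^2 := by nlinarith [hem, hem0]
    have h3 : e^2*(A+g^2) ≤ e^2 := by nlinarith [sq_nonneg e, hP]
    nlinarith [h1, h2, h3]
  · have hegpos : 0 < e*g := mul_pos_of_neg_of_neg heneg hgneg
    have hcpos : (0:ℝ) < (ε-e)*(2+ε+e) := mul_pos (by linarith) (by linarith)
    have hKnn : 0 ≤ Gv*(ε*(1+ε)) := mul_nonneg hG (mul_nonneg hε0.le (by linarith))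
    have hgoal : 0 ≤ (1-g^2-A)*e^2 - (2*(e*g*(1+e) - Gv*ε*(1+ε)))*m
        + ((ε-e)*(2+ε+e))*m^2 := by
      set b : ℝ := 2*(e*g*(1+e) - Gv*ε*(1+ε)) with hbdef
      set c : ℝ := (ε-e)*(2+ε+e) with hcdef
      rcases le_or_gt b 0 with hb | hb
      · have h1 : 0 ≤ (1-g^2-A)*e^2 := mul_nonneg (by nlinarith [hP]) (sq_nonneg e)
        have h2 : 0 ≤ -b*m := mul_nonneg (by linarith) hm0
        have h3 : 0 ≤ c*m^2 := mul_nonneg hcpos.le (sq_nonneg m)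
        linarith
      · have hble : b ≤ 2*(e*g) := by
          rw [hbdef]
          nlinarith [mul_nonneg hegpos.le (by linarith : (0:ℝ) ≤ -e),
            mul_nonneg (mul_nonneg hG hε0.le) (by linarith : (0:ℝ) ≤ 1+ε)]
        have h2eg : 0 ≤ 2*(e*g) := by linarith
        have hb2 : b^2 ≤ 4*(e^2*g^2) := by
          nlinarith [mul_le_mul hble hble hb.le h2eg]
        have hPc' : g^2 ≤ (1-g^2-A)*c := by rw [hcdef]; exact hPc
        have hmul : e^2*g^2 ≤ e^2*((1-g^2-A)*c) :=
          mul_le_mul_of_nonneg_left hPc' (sq_nonneg e)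
        have hdisc : b^2 ≤ 4*((1-g^2-A)*e^2*c) := by nlinarith [hb2, hmul]
        nlinarith [sq_nonneg (2*c*m - b), hdisc, hcpos, hm0]
    have hm2 : m^2 ≤ M^2 := by nlinarith [hmM, hm0]
    have hMred1 : 0 ≤ (Gv*(ε*(1+ε)))*(M-m) := mul_nonneg hKnn (by linarith)
    have hMred2 : (1+ε)^2*m^2 ≤ (1+ε)^2*M^2 :=
      mul_le_mul_of_nonneg_left hm2 (sq_nonneg (1+ε))
    nlinarith [hgoal, hMred1, hMred2]

set_option maxHeartbeats 1000000 in
lemma alg_lemma (s ε e m M : ℝ) (hs0 : 0 < s) (hs1 : s < 2/3) (hε0 : 0 < ε) (hε1 : ε < 1)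
    (he1 : -ε ≤ e) (he2 : e ≤ ε) (hm0 : 0 ≤ m) (hmM : m ≤ M)
    (hG : 0 ≤ 1 - 2*s*(1-ε) + s^2*ε*(1+ε)) :
    ((1+e)*(1-s*e)^2 + (1+e)*m - 1)^2 - e^2 ≤
      -(s*(1-ε)*(2-s*ε)*(2-2*s - s*(2-s)*ε + s^2*ε^2)) * e^2
      + 2*((1 - 2*s*(1-ε) + s^2*ε*(1+ε))*(ε*(1+ε)))*M + (1+ε)^2*M^2 := by
  have hkey : (1+e)*(1-s*e)^2 + (1+e)*m - 1
      = e*(1-2*s-s*e*(2-s)+s^2*e^2) + (1+e)*m := by ring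
  rw [hkey]
  apply abstract_quad _ _ _ ε e m M hε0 hε1 he1 he2 hm0 hmM hG
    (L1_Pge s ε e hs0 hs1 hε0 hε1 he1 he2)
  by_cases hcase : e*(1-2*s-s*e*(2-s)+s^2*e^2) ≤ ε*(1 - 2*s*(1-ε) + s^2*ε*(1+ε))
  · exact Or.inl hcase
  · push_neg at hcase
    have hεG : 0 ≤ ε*(1 - 2*s*(1-ε) + s^2*ε*(1+ε)) := mul_nonneg hε0.le hG
    have hegpos : 0 < e*(1-2*s-s*e*(2-s)+s^2*e^2) := lt_of_le_of_lt hεG hcase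
    have heneg : e < 0 := by
      by_contra hpos
      push_neg at hpos
      exact absurd (L2_easy s ε e hs0 hs1 hε0 hε1 hpos he2 hG) (not_le.mpr hcase)
    have hgneg : 1-2*s-s*e*(2-s)+s^2*e^2 < 0 := by
      rcases lt_trichotomy (1-2*s-s*e*(2-s)+s^2*e^2) 0 with hg | hg | hg
      · exact hg
      · rw [hg, mul_zero] at hegpos; exact absurd hegpos (lt_irrefl 0)
      · have : e*(1-2*s-s*e*(2-s)+s^2*e^2) < 0 := mul_neg_of_neg_of_pos heneg hg
        linarith
    exact Or.inr ⟨heneg, hgneg, L3_hard s ε e hs0 hs1 hε0 hε1 he1 heneg hgneg hG⟩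

set_option maxHeartbeats 1000000 in
/-- The Lyapunov difference bound for the error dynamics of the
Euler-discretized stably embedded satellite attitude kinematics. -/
theorem lyapunov_difference_bound (α h ε U : ℝ) (hα : 0 < α) (hh : 0 < h)
    (hε0 : 0 < ε) (hε1 : ε < 1) (hU : 0 < U)
    (hC1 : 0 < α * h ∧ α * h < 2 / 3)
    (hC4 : 1 - 2 * (α * h) * (1 - ε) + (α * h) ^ 2 * ε * (1 + ε) ≥ 0)
    (q w : ℕ → Quaternion ℝ) (hw : ∀ k, (w k).re = 0)
    (hdyn : ∀ k, q (k + 1) =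
      (1 - α * h * (‖q k‖ ^ 2 - 1)) • q k + (h / 2) • (q k * w k))
    (e : ℕ → ℝ) (he : ∀ k, e k = ‖q k‖ ^ 2 - 1)
    (k : ℕ) (hek : |e k| ≤ ε) (hwk : ‖w k‖ ≤ U) :
    e (k + 1) ^ 2 - e k ^ 2 ≤
      -(α * h * (1 - ε) * (2 - α * h * ε) *
          (2 - 2 * (α * h) - α * h * (2 - α * h) * ε + (α * h) ^ 2 * ε ^ 2)) *
          e k ^ 2
      + h ^ 2 *
        ((1 - 2 * (α * h) * (1 - ε) + (α * h) ^ 2 * ε * (1 + ε)) *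
            (ε * (1 + ε)) * U ^ 2 / 2
          + (1 + ε) ^ 2 * (h ^ 2 * U ^ 4 / 16)) := by
  obtain ⟨hαh0, hαh1⟩ := hC1
  obtain ⟨hek1, hek2⟩ := abs_le.mp hek
  have hq2 : ‖q k‖^2 = 1 + e k := by rw [he k]; ring
  have hqk1 : e (k+1) = (1 + e k)*(1 - (α*h)*(e k))^2
      + (1 + e k)*((h/2)^2*‖w k‖^2) - 1 := by
    rw [he (k+1), hdyn k, norm_step (q k) (w k) (hw k), hq2]
    ring
  have hm0 : 0 ≤ (h/2)^2*‖w k‖^2 := by positivity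
  have hmM : (h/2)^2*‖w k‖^2 ≤ (h/2)^2*U^2 := by
    have : ‖w k‖^2 ≤ U^2 := by nlinarith [norm_nonneg (w k)]
    nlinarith [sq_nonneg (h/2)]
  have halg := alg_lemma (α*h) ε (e k) ((h/2)^2*‖w k‖^2) ((h/2)^2*U^2)
    hαh0 hαh1 hε0 hε1 hek1 hek2 hm0 hmM (by nlinarith [hC4])
  rw [hqk1]
  nlinarith [halg]
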